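/- In the Heisenberg group, for every z ∈ ℂ and σ ∈ ℝ, the Carnot–Carathéodory distance from the identity satisfies max{|z|, √π·|σ|^{1/2}} ≤ ρ(0, zZ + z̄Z̄ + σ X∧Y) ≤ |z| + 2√π·|σ|^{1/2}. -/

import Mathlib

/-!
If a horizontal curve has length `L`, its endpoint `z` is the integral of its velocity, so
`|z| ≤ L`. Its enclosed area is controlled by `|σ| ≤ ½ ∫ |γ| |γ'| ≤ ½ ∫ ℓ ℓ' = L² / 4`, where `ℓ(t)`
is the length travelled up to time `t`; since `√π ≤ 2` this gives `√π |σ|^{1/2} ≤ L`.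
For the upper bound, first run once around a circle through the origin enclosing the area `σ`,
of length `2√π |σ|^{1/2}`, and then go straight to `z`: a segment issuing from the origin
sweeps no area.
-/

open MeasureTheory

/-- The Carnot–Carathéodory distance from the identity in the Heisenberg group
`G²(ℝ²)`, in exponential coordinates: the point is `a·X + b·Y + σ·X∧Y`.  Horizontal
curves are absolutely continuous curves `Γ = γ + γ⁽²⁾` with `γ' = u` and
`(γ⁽²⁾)' = ½ (x u₂ - y u₁)`, encoded via their `L¹` control `u = (u₁, u₂)`. -/
noncomputable def heisCC (a b σ : ℝ) : ℝ :=
  sInf {L : ℝ | ∃ u v : ℝ → ℝ,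
    IntervalIntegrable u volume 0 1 ∧ IntervalIntegrable v volume 0 1 ∧
    (∫ t in (0:ℝ)..1, u t) = a ∧ (∫ t in (0:ℝ)..1, v t) = b ∧
    (∫ t in (0:ℝ)..1,
        (1 / 2) * ((∫ s in (0:ℝ)..t, u s) * v t - (∫ s in (0:ℝ)..t, v s) * u t)) = σ ∧
    L = ∫ t in (0:ℝ)..1, Real.sqrt (u t ^ 2 + v t ^ 2)}

open Set Real

namespace IntervalIntegrable

variable {u v : ℝ → ℝ} {a b : ℝ}

lemma ofReal (hu : IntervalIntegrable u volume a b) :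
    IntervalIntegrable (fun t => (u t : ℂ)) volume a b :=
  ⟨hu.1.ofReal, hu.2.ofReal⟩

lemma sqrt_sq_add_sq (hu : IntervalIntegrable u volume a b)
    (hv : IntervalIntegrable v volume a b) :
    IntervalIntegrable (fun t => √(u t ^ 2 + v t ^ 2)) volume a b := by
  simpa only [Complex.norm_add_mul_I] using (hu.ofReal.add (hv.ofReal.mul_const Complex.I)).norm

end IntervalIntegrable

lemma sqrt_sq_add_sq_integral_le {u v : ℝ → ℝ} {a b : ℝ} (hab : a ≤ b)
    (hu : IntervalIntegrable u volume a b) (hv : IntervalIntegrable v volume a b) :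
    √((∫ t in a..b, u t) ^ 2 + (∫ t in a..b, v t) ^ 2) ≤ ∫ t in a..b, √(u t ^ 2 + v t ^ 2) := by
  have hI : ∫ t in a..b, ((u t : ℂ) + v t * Complex.I) =
      ((∫ t in a..b, u t : ℝ) : ℂ) + (∫ t in a..b, v t : ℝ) * Complex.I := by
    rw [intervalIntegral.integral_add hu.ofReal (hv.ofReal.mul_const Complex.I),
      intervalIntegral.integral_mul_const, intervalIntegral.integral_ofReal,
      intervalIntegral.integral_ofReal]
  have := intervalIntegral.norm_integral_le_integral_norm
    (f := fun t => (u t : ℂ) + v t * Complex.I) (μ := volume) hab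
  simpa only [hI, Complex.norm_add_mul_I] using this

lemma integral_primitive_mul_self {f : ℝ → ℝ} {a b : ℝ} (hf : IntervalIntegrable f volume a b) :
    ∫ t in a..b, (∫ s in a..t, f s) * f t = (∫ t in a..b, f t) ^ 2 / 2 := by
  set F : ℝ → ℝ := fun x => ∫ s in a..x, f s
  have hF : AbsolutelyContinuousOnInterval F a b :=
    hf.absolutelyContinuousOnInterval_intervalIntegral (by simp)
  have hFTC := hF.integral_deriv_mul_eq_sub hF
  have hderiv : ∀ᵐ t, t ∈ uIoc a b → deriv F t * F t + F t * deriv F t = 2 * (F t * f t) := by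
    filter_upwards [hf.ae_hasDerivAt_integral] with t ht ht'
    rw [(ht (uIoc_subset_uIcc ht') a left_mem_uIcc).deriv]
    ring
  rw [intervalIntegral.integral_congr_ae hderiv, intervalIntegral.integral_const_mul] at hFTC
  simp only [F, intervalIntegral.integral_same, mul_zero, sub_zero] at hFTC
  linear_combination hFTC / 2

lemma abs_mul_sub_mul_le_sqrt_mul_sqrt (x y u v : ℝ) :
    |x * v - y * u| ≤ √(x ^ 2 + y ^ 2) * √(u ^ 2 + v ^ 2) := by
  rw [← Real.sqrt_mul (by positivity)]
  exact Real.abs_le_sqrt (by nlinarith [sq_nonneg (x * u + y * v)])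

lemma intervalIntegrable_area_integrand {u v : ℝ → ℝ} {a b : ℝ}
    (hu : IntervalIntegrable u volume a b) (hv : IntervalIntegrable v volume a b) :
    IntervalIntegrable
      (fun t => (1 / 2) * ((∫ s in a..t, u s) * v t - (∫ s in a..t, v s) * u t)) volume a b :=
  ((hv.continuousOn_mul (intervalIntegral.continuousOn_primitive_interval' hu left_mem_uIcc)).sub
    (hu.continuousOn_mul (intervalIntegral.continuousOn_primitive_interval' hv left_mem_uIcc))).const_mul _

lemma abs_integral_area_le {u v : ℝ → ℝ} {a b : ℝ} (hab : a ≤ b)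
    (hu : IntervalIntegrable u volume a b) (hv : IntervalIntegrable v volume a b) :
    |∫ t in a..b, (1 / 2) * ((∫ s in a..t, u s) * v t - (∫ s in a..t, v s) * u t)| ≤
      (∫ t in a..b, √(u t ^ 2 + v t ^ 2)) ^ 2 / 4 := by
  set X : ℝ → ℝ := fun t => ∫ s in a..t, u s
  set Y : ℝ → ℝ := fun t => ∫ s in a..t, v s
  set f : ℝ → ℝ := fun t => √(u t ^ 2 + v t ^ 2)
  set ℓ : ℝ → ℝ := fun t => ∫ s in a..t, f s
  have hf : IntervalIntegrable f volume a b := hu.sqrt_sq_add_sq hv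
  have hpointwise : ∀ t ∈ Icc a b, |(1 / 2) * (X t * v t - Y t * u t)| ≤ (1 / 2) * (ℓ t * f t) := by
    intro t ht
    have hsub : uIcc a t ⊆ uIcc a b := uIcc_subset_uIcc_left (Icc_subset_uIcc ht)
    have hXY : √(X t ^ 2 + Y t ^ 2) ≤ ℓ t :=
      sqrt_sq_add_sq_integral_le ht.1 (hu.mono_set hsub) (hv.mono_set hsub)
    rw [abs_mul, abs_of_pos one_half_pos]
    gcongr
    exact (abs_mul_sub_mul_le_sqrt_mul_sqrt _ _ _ _).trans
      (mul_le_mul_of_nonneg_right hXY (Real.sqrt_nonneg _))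
  calc |∫ t in a..b, (1 / 2) * (X t * v t - Y t * u t)|
      ≤ ∫ t in a..b, |(1 / 2) * (X t * v t - Y t * u t)| :=
        intervalIntegral.abs_integral_le_integral_abs hab
    _ ≤ ∫ t in a..b, (1 / 2) * (ℓ t * f t) :=
        intervalIntegral.integral_mono_on hab
          (intervalIntegrable_area_integrand hu hv).abs
          ((hf.continuousOn_mul (intervalIntegral.continuousOn_primitive_interval' hf
            left_mem_uIcc)).const_mul _) hpointwise
    _ = (∫ t in a..b, f t) ^ 2 / 4 := by
        rw [intervalIntegral.integral_const_mul, integral_primitive_mul_self hf]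
        ring

lemma intervalIntegrable_ite_le {f g : ℝ → ℝ} (hf : Continuous f) (hg : Continuous g) (c a b : ℝ) :
    IntervalIntegrable (fun t => if t ≤ c then f t else g t) volume a b := by
  refine ((hf.abs.add hg.abs).intervalIntegrable a b).mono_fun
    (Measurable.ite measurableSet_Iic hf.measurable hg.measurable).aestronglyMeasurable
    (Filter.Eventually.of_forall fun t => ?_)
  simp only [Real.norm_eq_abs]
  split_ifs <;> simp [abs_of_nonneg (add_nonneg (abs_nonneg (f t)) (abs_nonneg (g t)))]

lemma integral_ite_of_le_right {f g : ℝ → ℝ} {c x y : ℝ} (hx : x ≤ c) (hy : y ≤ c) :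
    ∫ t in x..y, (if t ≤ c then f t else g t) = ∫ t in x..y, f t :=
  intervalIntegral.integral_congr fun _ ht => if_pos (ht.2.trans (max_le hx hy))

lemma integral_ite_of_le_left {f g : ℝ → ℝ} {c x y : ℝ} (hx : c ≤ x) (hy : c ≤ y) :
    ∫ t in x..y, (if t ≤ c then f t else g t) = ∫ t in x..y, g t := by
  refine intervalIntegral.integral_congr_ae (Filter.Eventually.of_forall fun t ht => ?_)
  exact if_neg (not_le.mpr ((le_min hx hy).trans_lt ht.1))

lemma half_mem_uIcc : (1 / 2 : ℝ) ∈ uIcc 0 1 := by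
  rw [uIcc_of_le zero_le_one]
  norm_num

section CircleThenSegment

variable (a b r : ℝ)

/- The velocity of the curve that runs along `(|r| sin 4πt, r (1 - cos 4πt))`, a circle of radius
`|r|` through the origin, for `t ≤ 1/2`, and then along the segment from the origin to `(a, b)`. -/
noncomputable def circleThenSegmentU (t : ℝ) : ℝ :=
  if t ≤ 1 / 2 then 4 * π * |r| * cos (4 * π * t) else 2 * a

noncomputable def circleThenSegmentV (t : ℝ) : ℝ :=
  if t ≤ 1 / 2 then 4 * π * r * sin (4 * π * t) else 2 * b

local notation "U" => circleThenSegmentU a r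
local notation "V" => circleThenSegmentV b r

lemma intervalIntegrable_circleThenSegmentU (x y : ℝ) : IntervalIntegrable U volume x y :=
  intervalIntegrable_ite_le (by fun_prop) continuous_const _ x y

lemma intervalIntegrable_circleThenSegmentV (x y : ℝ) : IntervalIntegrable V volume x y :=
  intervalIntegrable_ite_le (by fun_prop) continuous_const _ x y

variable {a b r}

lemma circleThenSegmentU_of_le {t : ℝ} (ht : t ≤ 1 / 2) : U t = 4 * π * |r| * cos (4 * π * t) :=
  if_pos ht

lemma circleThenSegmentV_of_le {t : ℝ} (ht : t ≤ 1 / 2) : V t = 4 * π * r * sin (4 * π * t) :=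
  if_pos ht

lemma circleThenSegmentU_of_gt {t : ℝ} (ht : 1 / 2 < t) : U t = 2 * a :=
  if_neg (not_le.mpr ht)

lemma circleThenSegmentV_of_gt {t : ℝ} (ht : 1 / 2 < t) : V t = 2 * b :=
  if_neg (not_le.mpr ht)

lemma integral_circleThenSegmentU_of_le {t : ℝ} (ht : t ≤ 1 / 2) :
    ∫ s in (0:ℝ)..t, U s = |r| * sin (4 * π * t) := by
  unfold circleThenSegmentU
  rw [integral_ite_of_le_right (by norm_num) ht,
    intervalIntegral.integral_const_mul,
    intervalIntegral.integral_comp_mul_left _ (by positivity), integral_cos]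
  simp only [mul_inv_rev, mul_zero, sin_zero, sub_zero, smul_eq_mul]
  field_simp

lemma integral_circleThenSegmentV_of_le {t : ℝ} (ht : t ≤ 1 / 2) :
    ∫ s in (0:ℝ)..t, V s = r * (1 - cos (4 * π * t)) := by
  unfold circleThenSegmentV
  rw [integral_ite_of_le_right (by norm_num) ht,
    intervalIntegral.integral_const_mul,
    intervalIntegral.integral_comp_mul_left _ (by positivity), integral_sin]
  simp only [mul_inv_rev, mul_zero, cos_zero, smul_eq_mul]
  field_simp

lemma integral_circleThenSegmentU_of_ge {t : ℝ} (ht : 1 / 2 ≤ t) :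
    ∫ s in (0:ℝ)..t, U s = 2 * a * (t - 1 / 2) := by
  rw [← intervalIntegral.integral_add_adjacent_intervals
    (intervalIntegrable_circleThenSegmentU a r _ _) (intervalIntegrable_circleThenSegmentU a r _ _),
    integral_circleThenSegmentU_of_le le_rfl]
  unfold circleThenSegmentU
  rw [integral_ite_of_le_left le_rfl ht,
    show 4 * π * (1 / 2) = 2 * π by ring, sin_two_pi]
  rw [intervalIntegral.integral_const, smul_eq_mul]
  ring

lemma integral_circleThenSegmentV_of_ge {t : ℝ} (ht : 1 / 2 ≤ t) :
    ∫ s in (0:ℝ)..t, V s = 2 * b * (t - 1 / 2) := by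
  rw [← intervalIntegral.integral_add_adjacent_intervals
    (intervalIntegrable_circleThenSegmentV b r _ _) (intervalIntegrable_circleThenSegmentV b r _ _),
    integral_circleThenSegmentV_of_le le_rfl]
  unfold circleThenSegmentV
  rw [integral_ite_of_le_left le_rfl ht,
    show 4 * π * (1 / 2) = 2 * π by ring, cos_two_pi]
  rw [intervalIntegral.integral_const, smul_eq_mul]
  ring

lemma area_circleThenSegment :
    ∫ t in (0:ℝ)..1, (1 / 2) * ((∫ s in (0:ℝ)..t, U s) * V t - (∫ s in (0:ℝ)..t, V s) * U t) =
      π * r * |r| := by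
  have hint := intervalIntegrable_area_integrand (intervalIntegrable_circleThenSegmentU a r 0 1)
    (intervalIntegrable_circleThenSegmentV b r 0 1)
  have hcircle : ∀ t ∈ uIcc (0:ℝ) (1 / 2),
      (1 / 2) * ((∫ s in (0:ℝ)..t, U s) * V t - (∫ s in (0:ℝ)..t, V s) * U t) =
        2 * π * (r * |r|) * (1 - cos (4 * π * t)) := by
    intro t ht
    have ht' : t ≤ 1 / 2 := ht.2.trans (max_le (by norm_num) le_rfl)
    rw [integral_circleThenSegmentU_of_le ht', integral_circleThenSegmentV_of_le ht',
      circleThenSegmentU_of_le ht', circleThenSegmentV_of_le ht']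
    linear_combination (2 * π * (r * |r|)) * sin_sq_add_cos_sq (4 * π * t)
  have hsegment : ∀ᵐ t, t ∈ uIoc (1 / 2 : ℝ) 1 →
      (1 / 2) * ((∫ s in (0:ℝ)..t, U s) * V t - (∫ s in (0:ℝ)..t, V s) * U t) = 0 := by
    refine Filter.Eventually.of_forall fun t ht => ?_
    have ht' : 1 / 2 < t := (le_min le_rfl (by norm_num : (1 / 2 : ℝ) ≤ 1)).trans_lt ht.1
    rw [integral_circleThenSegmentU_of_ge ht'.le, integral_circleThenSegmentV_of_ge ht'.le,
      circleThenSegmentU_of_gt ht', circleThenSegmentV_of_gt ht']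
    ring
  rw [← intervalIntegral.integral_add_adjacent_intervals
      (hint.mono_set (uIcc_subset_uIcc left_mem_uIcc half_mem_uIcc))
      (hint.mono_set (uIcc_subset_uIcc half_mem_uIcc right_mem_uIcc)),
    intervalIntegral.integral_congr hcircle, intervalIntegral.integral_congr_ae hsegment,
    intervalIntegral.integral_const_mul, intervalIntegral.integral_sub intervalIntegrable_const
      ((by fun_prop : Continuous fun t => cos (4 * π * t)).intervalIntegrable _ _),
    intervalIntegral.integral_comp_mul_left _ (by positivity), integral_cos,
    show 4 * π * (1 / 2) = 2 * π by ring, sin_two_pi]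
  simp only [intervalIntegral.integral_const, smul_eq_mul, mul_zero, sin_zero, sub_zero,
    intervalIntegral.integral_zero, add_zero]
  ring

lemma length_circleThenSegment :
    ∫ t in (0:ℝ)..1, √(U t ^ 2 + V t ^ 2) = √(a ^ 2 + b ^ 2) + 2 * π * |r| := by
  have hint := (intervalIntegrable_circleThenSegmentU a r 0 1).sqrt_sq_add_sq
    (intervalIntegrable_circleThenSegmentV b r 0 1)
  have hcircle : ∀ t ∈ uIcc (0:ℝ) (1 / 2), √(U t ^ 2 + V t ^ 2) = 4 * π * |r| := by
    intro t ht
    have ht' : t ≤ 1 / 2 := ht.2.trans (max_le (by norm_num) le_rfl)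
    have hsq : (4 * π * |r| * cos (4 * π * t)) ^ 2 + (4 * π * r * sin (4 * π * t)) ^ 2 =
        (4 * π * |r|) ^ 2 := by
      linear_combination (4 * π * r) ^ 2 * sin_sq_add_cos_sq (4 * π * t) +
        (4 * π) ^ 2 * (cos (4 * π * t) ^ 2 - 1) * sq_abs r
    rw [circleThenSegmentU_of_le ht', circleThenSegmentV_of_le ht', hsq, sqrt_sq (by positivity)]
  have hsegment : ∀ᵐ t, t ∈ uIoc (1 / 2 : ℝ) 1 → √(U t ^ 2 + V t ^ 2) = 2 * √(a ^ 2 + b ^ 2) := by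
    refine Filter.Eventually.of_forall fun t ht => ?_
    have ht' : 1 / 2 < t := (le_min le_rfl (by norm_num : (1 / 2 : ℝ) ≤ 1)).trans_lt ht.1
    rw [circleThenSegmentU_of_gt ht', circleThenSegmentV_of_gt ht',
      show (2 * a) ^ 2 + (2 * b) ^ 2 = 2 ^ 2 * (a ^ 2 + b ^ 2) by ring,
      sqrt_mul (by norm_num), sqrt_sq (by norm_num)]
  rw [← intervalIntegral.integral_add_adjacent_intervals
      (hint.mono_set (uIcc_subset_uIcc left_mem_uIcc half_mem_uIcc))
      (hint.mono_set (uIcc_subset_uIcc half_mem_uIcc right_mem_uIcc)),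
    intervalIntegral.integral_congr hcircle, intervalIntegral.integral_congr_ae hsegment]
  simp only [intervalIntegral.integral_const, smul_eq_mul]
  ring

end CircleThenSegment

lemma exists_pi_mul_mul_abs_eq (σ : ℝ) : ∃ r : ℝ, π * r * |r| = σ ∧ π * |r| = √π * √|σ| := by
  set s := √(|σ| / π)
  have hs : 0 ≤ s := sqrt_nonneg _
  have hs_sq : π * s * s = |σ| := by
    rw [mul_assoc, mul_self_sqrt (by positivity), mul_div_cancel₀ _ pi_pos.ne']
  have hs_len : π * s = √π * √|σ| := by
    rw [show s = √|σ| / √π from sqrt_div (abs_nonneg σ) π, mul_div_left_comm, div_sqrt, mul_comm]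
  rcases le_total 0 σ with hσ | hσ
  · refine ⟨s, ?_, ?_⟩ <;> rw [abs_of_nonneg hs]
    exacts [hs_sq.trans (abs_of_nonneg hσ), hs_len]
  · refine ⟨-s, ?_, ?_⟩ <;> rw [abs_neg, abs_of_nonneg hs]
    · linear_combination -hs_sq - abs_of_nonpos hσ
    · exact hs_len

def IsHorizontalControl (a b σ : ℝ) (u v : ℝ → ℝ) : Prop :=
  IntervalIntegrable u volume 0 1 ∧ IntervalIntegrable v volume 0 1 ∧
    (∫ t in (0:ℝ)..1, u t) = a ∧ (∫ t in (0:ℝ)..1, v t) = b ∧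
    (∫ t in (0:ℝ)..1,
      (1 / 2) * ((∫ s in (0:ℝ)..t, u s) * v t - (∫ s in (0:ℝ)..t, v s) * u t)) = σ

namespace IsHorizontalControl

variable {a b σ : ℝ} {u v : ℝ → ℝ}

lemma heisCC_le (h : IsHorizontalControl a b σ u v) :
    heisCC a b σ ≤ ∫ t in (0:ℝ)..1, √(u t ^ 2 + v t ^ 2) := by
  obtain ⟨hu, hv, ha, hb, hσ⟩ := h
  refine csInf_le ⟨0, ?_⟩ ⟨u, v, hu, hv, ha, hb, hσ, rfl⟩
  rintro _ ⟨u, v, -, -, -, -, -, rfl⟩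
  exact intervalIntegral.integral_nonneg zero_le_one fun t _ => sqrt_nonneg _

lemma sqrt_sq_add_sq_le_length (h : IsHorizontalControl a b σ u v) :
    √(a ^ 2 + b ^ 2) ≤ ∫ t in (0:ℝ)..1, √(u t ^ 2 + v t ^ 2) := by
  obtain ⟨hu, hv, rfl, rfl, -⟩ := h
  exact sqrt_sq_add_sq_integral_le zero_le_one hu hv

lemma sqrt_pi_mul_sqrt_abs_le_length (h : IsHorizontalControl a b σ u v) :
    √π * √|σ| ≤ ∫ t in (0:ℝ)..1, √(u t ^ 2 + v t ^ 2) := by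
  obtain ⟨hu, hv, -, -, hσ⟩ := h
  have harea := abs_integral_area_le zero_le_one hu hv
  rw [hσ] at harea
  set L := ∫ t in (0:ℝ)..1, √(u t ^ 2 + v t ^ 2)
  have hL : 0 ≤ L := intervalIntegral.integral_nonneg zero_le_one fun t _ => sqrt_nonneg _
  have hπ : √π ≤ 2 := sqrt_le_iff.mpr ⟨zero_le_two, by linarith [pi_le_four]⟩
  have hσL : √|σ| ≤ L / 2 := sqrt_le_iff.mpr ⟨by positivity, by linarith⟩
  calc √π * √|σ| ≤ 2 * (L / 2) := mul_le_mul hπ hσL (sqrt_nonneg _) zero_le_two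
    _ = L := by ring

end IsHorizontalControl

lemma le_heisCC {a b σ m : ℝ} (hne : ∃ u v, IsHorizontalControl a b σ u v)
    (hle : ∀ u v, IsHorizontalControl a b σ u v → m ≤ ∫ t in (0:ℝ)..1, √(u t ^ 2 + v t ^ 2)) :
    m ≤ heisCC a b σ := by
  obtain ⟨u, v, hu, hv, ha, hb, hσ⟩ := hne
  refine le_csInf ⟨_, u, v, hu, hv, ha, hb, hσ, rfl⟩ ?_
  rintro _ ⟨u, v, hu, hv, ha, hb, hσ, rfl⟩
  exact hle u v ⟨hu, hv, ha, hb, hσ⟩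

lemma isHorizontalControl_circleThenSegment (a b r : ℝ) :
    IsHorizontalControl a b (π * r * |r|) (circleThenSegmentU a r) (circleThenSegmentV b r) := by
  refine ⟨intervalIntegrable_circleThenSegmentU a r 0 1,
    intervalIntegrable_circleThenSegmentV b r 0 1, ?_, ?_, area_circleThenSegment⟩
  · rw [integral_circleThenSegmentU_of_ge (by norm_num)]
    ring
  · rw [integral_circleThenSegmentV_of_ge (by norm_num)]
    ring

/-- For `z ∈ ℂ` and `σ ∈ ℝ`,
`max{|z|, √π |σ|^{1/2}} ≤ ρ(0, zZ + z̄Z̄ + σX∧Y) ≤ |z| + 2√π |σ|^{1/2}`. -/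
theorem stmt_7 (z : ℂ) (σ : ℝ) :
    max (‖z‖) (Real.sqrt Real.pi * |σ| ^ ((1:ℝ)/2)) ≤ heisCC z.re z.im σ ∧
    heisCC z.re z.im σ ≤ ‖z‖ + 2 * Real.sqrt Real.pi * |σ| ^ ((1:ℝ)/2) := by
  obtain ⟨r, hσ, hr⟩ := exists_pi_mul_mul_abs_eq σ
  have hctrl : IsHorizontalControl z.re z.im σ _ _ :=
    hσ ▸ isHorizontalControl_circleThenSegment z.re z.im r
  rw [← sqrt_eq_rpow, Complex.norm_eq_sqrt_sq_add_sq]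
  refine ⟨le_heisCC ⟨_, _, hctrl⟩ fun u v h =>
    max_le h.sqrt_sq_add_sq_le_length h.sqrt_pi_mul_sqrt_abs_le_length, ?_⟩
  refine hctrl.heisCC_le.trans_eq ?_
  rw [length_circleThenSegment]
  linear_combination 2 * hr
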